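/- (Theorem 9, second part) Let s ≥ 1 and let n₁, …, n_s ∈ ℕ with N := n₁ + ⋯ + n_s ≥ 1. Then Σ_{l=0}^{N} C(N,l)·(−1)^l·ξ_{l,q} = [2]_q + q²·ξ_{N,1/q}, where ξ_{N,1/q} denotes the q-Euler number with parameter 1/q in place of q (the factor q², omitted in the paper's displayed formula, is required for the identity to hold, consistently with Theorem 8). -/

import Mathlib

/-!
Expanding `ξ_{l,q}`, the left side is a composite of two binomial transforms, and
`Σ_l C(N,l) C(l,j) x^l = C(N,j) x^j (1+x)^(N-j)` with `x = 1/(q-1)` collapses it to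
`(1+q)/(q-1)^N · Σ_j C(N,j) (-1)^j q^(N-j) / (1+q^(j+1))`.
Clearing `1/q` in `q² ξ_{N,1/q}` gives the same sum with an extra factor `q^(2(j+1))`, so the
difference has terms `C(N,j) (-1)^j q^(N-j) (1 - q^(j+1))`, which add up to
`(q-1)^N - q (q-q)^N = (q-1)^N` when `N ≥ 1`.
Over `ℚ_p` the denominators `1 + q^m` are nonzero because `q^m ≡ 1`, so `1 + q^m ≡ 2`,
a unit for odd `p`.
-/

open Finset Filter

/-- `[a]_q = (1 - q^a)/(1 - q)` for `a : ℤ`. -/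
noncomputable def qnum {p : ℕ} [Fact p.Prime] (q : ℚ_[p]) (a : ℤ) : ℚ_[p] :=
  (1 - q ^ a) / (1 - q)

/-- Kim's q-Euler polynomial `ξ_{n,q}(x)` (closed form). -/
noncomputable def xi {p : ℕ} [Fact p.Prime] (q : ℚ_[p]) (n : ℕ) (x : ℤ) : ℚ_[p] :=
  ((1 + q) / (1 - q) ^ n) *
    ∑ l ∈ Finset.range (n + 1),
      (n.choose l : ℚ_[p]) * (-1) ^ l * q ^ ((l : ℤ) * x) / (1 + q ^ (l + 1))

/-- The fermionic p-adic `r`-integral statement: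
`∫_{ℤ_p} g dμ_{-r} = L` means the Riemann-type sums
`(1/[p^N]_{-r}) · Σ_{x=0}^{p^N-1} g(x) (-r)^x` converge to `L`. -/
def fermionicIntegral (p : ℕ) [Fact p.Prime] (r : ℚ_[p]) (g : ℕ → ℚ_[p]) (L : ℚ_[p]) : Prop :=
  Filter.Tendsto
    (fun N : ℕ => ((1 + r) / (1 - (-r) ^ (p ^ N))) * ∑ x ∈ Finset.range (p ^ N), g x * (-r) ^ x)
    Filter.atTop (nhds L)

/-- The q-Bernstein polynomial `B_{k,n}(x,q) = C(n,k) [x]_q^k [1-x]_{1/q}^{n-k}`. -/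
noncomputable def bern {p : ℕ} [Fact p.Prime] (q : ℚ_[p]) (k n : ℕ) (x : ℤ) : ℚ_[p] :=
  (n.choose k : ℚ_[p]) * (qnum q x) ^ k * (qnum q⁻¹ (1 - x)) ^ (n - k)

theorem sum_choose_mul_pow_mul_sum_choose {R : Type*} [CommSemiring R] (x : R) (g : ℕ → R)
    (N : ℕ) :
    ∑ l ∈ range (N + 1), (N.choose l : R) * x ^ l * ∑ j ∈ range (l + 1), (l.choose j : R) * g j
      = ∑ j ∈ range (N + 1), (N.choose j : R) * x ^ j * (1 + x) ^ (N - j) * g j := by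
  simp_rw [mul_sum]
  rw [sum_comm' (t' := range (N + 1)) (s' := fun j => Ico j (N + 1))
    (by intro l j; simp only [mem_range, mem_Ico]; omega)]
  refine sum_congr rfl fun j hj => ?_
  have hjN : j ≤ N := Nat.lt_succ_iff.mp (mem_range.mp hj)
  rw [sum_Ico_eq_sum_range, show N + 1 - j = N - j + 1 by omega, add_comm 1 x, add_pow,
    mul_sum, sum_mul]
  refine sum_congr rfl fun m _ => ?_
  have hc : (N.choose (j + m) : R) * ((j + m).choose j : R) = N.choose j * (N - j).choose m := by
    have h := Nat.choose_mul (n := N) (Nat.le_add_right j m)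
    rw [Nat.add_sub_cancel_left] at h
    exact_mod_cast congrArg (Nat.cast : ℕ → R) h
  calc (N.choose (j + m) : R) * x ^ (j + m) * (((j + m).choose j : R) * g j)
      = (N.choose (j + m) * ((j + m).choose j : R)) * x ^ (j + m) * g j := by ring
    _ = _ := by rw [hc, one_pow]; ring

section QEuler

variable {K : Type*} [Field K]

def qEulerNumber (q : K) (n : ℕ) : K :=
  (1 + q) / (1 - q) ^ n * ∑ j ∈ range (n + 1), (n.choose j : K) * (-1) ^ j / (1 + q ^ (j + 1))

theorem sum_choose_neg_one_pow_mul_qEulerNumber_eq {q : K} (hq1 : q ≠ 1) (N : ℕ) :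
    ∑ l ∈ range (N + 1), (N.choose l : K) * (-1) ^ l * qEulerNumber q l
      = (1 + q) / (q - 1) ^ N *
          ∑ j ∈ range (N + 1), (N.choose j : K) * (-1) ^ j * q ^ (N - j) / (1 + q ^ (j + 1)) := by
  have hq1' : q - 1 ≠ 0 := sub_ne_zero.mpr hq1
  have hterm : ∀ l, (N.choose l : K) * (-1) ^ l * qEulerNumber q l = (1 + q) *
      ((N.choose l : K) * (q - 1)⁻¹ ^ l *
        ∑ j ∈ range (l + 1), (l.choose j : K) * ((-1) ^ j / (1 + q ^ (j + 1)))) := by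
    intro l
    rw [qEulerNumber, show (1 - q) = -1 * (q - 1) by ring, mul_pow, inv_pow]
    field_simp
  simp_rw [hterm]
  rw [← mul_sum, sum_choose_mul_pow_mul_sum_choose, div_mul_eq_mul_div, mul_div_assoc, sum_div]
  congr 1
  refine sum_congr rfl fun j hj => ?_
  have hjN : j ≤ N := Nat.lt_succ_iff.mp (mem_range.mp hj)
  have hsucc : 1 + (q - 1)⁻¹ = q * (q - 1)⁻¹ := by field_simp; ring
  have hpow : (q - 1)⁻¹ ^ j * (q - 1)⁻¹ ^ (N - j) = ((q - 1) ^ N)⁻¹ := by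
    rw [← pow_add, Nat.add_sub_cancel' hjN, inv_pow]
  rw [hsucc, mul_pow]
  calc _ = (N.choose j : K) * (-1) ^ j * q ^ (N - j) / (1 + q ^ (j + 1)) *
        ((q - 1)⁻¹ ^ j * (q - 1)⁻¹ ^ (N - j)) := by ring
    _ = _ := by rw [hpow, div_eq_mul_inv _ ((q - 1) ^ N)]

theorem sq_mul_qEulerNumber_inv {q : K} (hq0 : q ≠ 0) (N : ℕ) :
    q ^ 2 * qEulerNumber q⁻¹ N = (1 + q) / (q - 1) ^ N * ∑ j ∈ range (N + 1),
      (N.choose j : K) * (-1) ^ j * q ^ (N - j) * q ^ (2 * (j + 1)) / (1 + q ^ (j + 1)) := by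
  rw [qEulerNumber, mul_sum, mul_sum, mul_sum]
  refine sum_congr rfl fun j hj => ?_
  obtain ⟨k, rfl⟩ := Nat.exists_eq_add_of_le (Nat.lt_succ_iff.mp (mem_range.mp hj))
  have hsub : 1 - q⁻¹ = (q - 1) / q := by field_simp
  have hadd : 1 + q⁻¹ = (q + 1) / q := by field_simp
  have haddj : 1 + (q ^ (j + 1))⁻¹ = (q ^ (j + 1) + 1) / q ^ (j + 1) := by field_simp
  rw [Nat.add_sub_cancel_left, inv_pow, hsub, hadd, haddj, div_pow]
  field_simp
  ring

theorem sum_choose_neg_one_pow_mul_pow_mul_one_sub_pow {R : Type*} [CommRing R] (q : R) {N : ℕ}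
    (hN : N ≠ 0) :
    ∑ j ∈ range (N + 1), (N.choose j : R) * (-1) ^ j * q ^ (N - j) * (1 - q ^ (j + 1))
      = (q - 1) ^ N := by
  have hfirst := add_pow (-1) q N
  have hsecond := add_pow (-q) q N
  rw [neg_add_cancel, zero_pow hN] at hsecond
  rw [neg_add_eq_sub] at hfirst
  calc _ = ∑ j ∈ range (N + 1), (-1) ^ j * q ^ (N - j) * (N.choose j : R)
        - q * ∑ j ∈ range (N + 1), (-q) ^ j * q ^ (N - j) * (N.choose j : R) := by
          rw [mul_sum, ← sum_sub_distrib]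
          refine sum_congr rfl fun j _ => ?_
          rw [neg_pow q]
          ring
    _ = (q - 1) ^ N := by rw [← hfirst, ← hsecond, mul_zero, sub_zero]

theorem sum_choose_neg_one_pow_mul_qEulerNumber {q : K} (hq0 : q ≠ 0) (hq1 : q ≠ 1)
    (hD : ∀ m : ℕ, 1 + q ^ (m + 1) ≠ 0) {N : ℕ} (hN : N ≠ 0) :
    ∑ l ∈ range (N + 1), (N.choose l : K) * (-1) ^ l * qEulerNumber q l
      = (1 + q) + q ^ 2 * qEulerNumber q⁻¹ N := by
  have hq1' : q - 1 ≠ 0 := sub_ne_zero.mpr hq1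
  rw [sum_choose_neg_one_pow_mul_qEulerNumber_eq hq1, sq_mul_qEulerNumber_inv hq0]
  have hdiff : ∑ j ∈ range (N + 1), (N.choose j : K) * (-1) ^ j * q ^ (N - j) / (1 + q ^ (j + 1))
      = (q - 1) ^ N + ∑ j ∈ range (N + 1),
        (N.choose j : K) * (-1) ^ j * q ^ (N - j) * q ^ (2 * (j + 1)) / (1 + q ^ (j + 1)) := by
    rw [← sum_choose_neg_one_pow_mul_pow_mul_one_sub_pow q hN, ← sum_add_distrib]
    refine sum_congr rfl fun j _ => ?_
    field_simp [hD j]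
    ring
  rw [hdiff, mul_add, div_mul_cancel₀ _ (pow_ne_zero N hq1')]

end QEuler

theorem norm_le_one_of_norm_one_sub_lt_one {R : Type*} [NormedRing R] [NormOneClass R]
    [IsUltrametricDist R] {q : R} (hq : ‖1 - q‖ < 1) : ‖q‖ ≤ 1 :=
  calc ‖q‖ = ‖1 + -(1 - q)‖ := by rw [neg_sub, add_sub_cancel]
    _ ≤ max ‖(1 : R)‖ ‖-(1 - q)‖ := IsUltrametricDist.norm_add_le_max _ _
    _ ≤ 1 := by rw [norm_neg, norm_one]; exact max_le le_rfl hq.le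

theorem norm_one_sub_pow_le {R : Type*} [NormedRing R] [NormOneClass R] [IsUltrametricDist R]
    {q : R} (hq : ‖q‖ ≤ 1) (m : ℕ) : ‖1 - q ^ m‖ ≤ ‖1 - q‖ := by
  rw [← mul_neg_geom_sum]
  refine (norm_mul_le _ _).trans (mul_le_of_le_one_right (norm_nonneg _) ?_)
  exact IsUltrametricDist.norm_sum_le_of_forall_le_of_nonneg zero_le_one
    fun i _ => (norm_pow_le q i).trans (pow_le_one₀ (norm_nonneg q) hq)

namespace Padic

variable {p : ℕ} [Fact p.Prime]

theorem norm_two_eq_one (hp : Odd p) : ‖(2 : ℚ_[p])‖ = 1 := by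
  exact_mod_cast norm_natCast_eq_one_iff.mpr (Nat.coprime_two_right.mpr hp)

theorem one_add_pow_ne_zero (hp : Odd p) {q : ℚ_[p]} (hq : ‖1 - q‖ < 1) (m : ℕ) :
    1 + q ^ m ≠ 0 := by
  intro h
  have hlt := (norm_one_sub_pow_le (norm_le_one_of_norm_one_sub_lt_one hq) m).trans_lt hq
  rw [show 1 - q ^ m = 2 by linear_combination -h, norm_two_eq_one hp] at hlt
  exact lt_irrefl _ hlt

end Padic

theorem xi_zero_eq_qEulerNumber {p : ℕ} [Fact p.Prime] (q : ℚ_[p]) (n : ℕ) :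
    xi q n 0 = qEulerNumber q n := by
  simp [xi, qEulerNumber]

theorem stmt19_general (p : ℕ) [Fact p.Prime] (hp : Odd p) (q : ℚ_[p]) (hq : ‖1 - q‖ < 1) (hq1 : q ≠ 1) (s : ℕ) (n : Fin s → ℕ) (hN : 1 ≤ ∑ i, n i) :
    ∑ l ∈ Finset.range ((∑ i, n i) + 1), ((∑ i, n i).choose l : ℚ_[p]) * (-1) ^ l * xi q l 0
      = (1 + q) + q ^ 2 * xi q⁻¹ (∑ i, n i) 0 := by
  have hq0 : q ≠ 0 := by
    rintro rfl
    simp at hq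
  simp only [xi_zero_eq_qEulerNumber]
  exact sum_choose_neg_one_pow_mul_qEulerNumber hq0 hq1
    (fun m => Padic.one_add_pow_ne_zero hp hq (m + 1)) (Nat.one_le_iff_ne_zero.mp hN)

theorem stmt19 (p : ℕ) [Fact p.Prime] (hp : Odd p) (q : ℚ_[p]) (hq : ‖1 - q‖ < 1) (hq1 : q ≠ 1) (s : ℕ) (hs : 1 ≤ s) (n : Fin s → ℕ) (hN : 1 ≤ ∑ i, n i) :
    ∑ l ∈ Finset.range ((∑ i, n i) + 1), ((∑ i, n i).choose l : ℚ_[p]) * (-1) ^ l * xi q l 0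
      = (1 + q) + q ^ 2 * xi q⁻¹ (∑ i, n i) 0 :=
  stmt19_general p hp q hq hq1 s n hN
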